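/- arXiv:2210.11662 — 2 statements merged into one kernel-verified Lean document; each statement's English description precedes it below -/
import Mathlib

section
/- Let Σ be an n×n real symmetric positive definite matrix, μ ∈ ℝⁿ with μ ≠ 0, and let Φ denote the cumulative distribution function of the standard normal distribution. Then for every nonzero v ∈ ℝⁿ, Φ(−vᵀμ/√(vᵀΣv)) ≤ Φ(√(μᵀΣ⁻¹μ)), and equality holds for v = −Σ⁻¹μ. In other words, the maximum descent probability is Φ(√(μᵀΣ⁻¹μ)), attained at the most probable descent direction −Σ⁻¹μ. -/
open Matrix MeasureTheory ProbabilityTheory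

/-- The cumulative distribution function of the standard normal distribution. -/
noncomputable def stdNormalCDF (t : ℝ) : ℝ :=
  ((gaussianReal 0 1) (Set.Iic t)).toReal

lemma cdf_mono {a b : ℝ} (h : a ≤ b) : stdNormalCDF a ≤ stdNormalCDF b := by
  unfold stdNormalCDF
  exact ENNReal.toReal_mono (measure_ne_top _ _) (measure_mono (Set.Iic_subset_Iic.mpr h))

-- Cauchy-Schwarz for posdef bilinear form
lemma cs (n : ℕ) (S : Matrix (Fin n) (Fin n) ℝ) (hS : S.PosDef) (v w : Fin n → ℝ) :
    (v ⬝ᵥ S.mulVec w)^2 ≤ (v ⬝ᵥ S.mulVec v) * (w ⬝ᵥ S.mulVec w) := by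
  have hsym : ∀ x y : Fin n → ℝ, x ⬝ᵥ S.mulVec y = y ⬝ᵥ S.mulVec x := by
    intro x y
    rw [Matrix.dotProduct_mulVec, ← Matrix.mulVec_transpose, (show Sᵀ = S by simpa using hS.isHermitian.eq)]
    exact dotProduct_comm _ _
  have key : ∀ t : ℝ, 0 ≤ (w ⬝ᵥ S.mulVec w) * (t * t) + (2 * (v ⬝ᵥ S.mulVec w)) * t + (v ⬝ᵥ S.mulVec v) := by
    intro t
    have h0 := hS.posSemidef.dotProduct_mulVec_nonneg (t • w + v); rw [star_trivial] at h0
    have expand : (t • w + v) ⬝ᵥ S.mulVec (t • w + v)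
        = (w ⬝ᵥ S.mulVec w) * (t * t) + (2 * (v ⬝ᵥ S.mulVec w)) * t + (v ⬝ᵥ S.mulVec v) := by
      rw [Matrix.mulVec_add, Matrix.mulVec_smul]
      simp [add_dotProduct, smul_dotProduct, dotProduct_add,
        dotProduct_smul, smul_eq_mul, hsym w v]
      ring
    linarith [expand ▸ h0]
  have h2 := discrim_le_zero (a := (w ⬝ᵥ S.mulVec w)) (b := 2 * (v ⬝ᵥ S.mulVec w)) (c := (v ⬝ᵥ S.mulVec v)) key
  unfold discrim at h2
  nlinarith

/-- For an `n × n` real symmetric positive definite matrix `Σ` and nonzero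
`μ ∈ ℝⁿ`, for every nonzero `v`, `Φ(-(vᵀμ)/√(vᵀΣv)) ≤ Φ(√(μᵀΣ⁻¹μ))`, with equality at
`v = -Σ⁻¹μ`: the maximum descent probability is `Φ(√(μᵀΣ⁻¹μ))`, attained at the most
probable descent direction `-Σ⁻¹μ`. -/
theorem stmt_3 (n : ℕ) (S : Matrix (Fin n) (Fin n) ℝ) (hS : S.PosDef) (μ : Fin n → ℝ)
    (hμ : μ ≠ 0) :
    (∀ v : Fin n → ℝ, v ≠ 0 →
      stdNormalCDF (-(v ⬝ᵥ μ) / Real.sqrt (v ⬝ᵥ S.mulVec v))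
        ≤ stdNormalCDF (Real.sqrt (μ ⬝ᵥ S⁻¹.mulVec μ))) ∧
    stdNormalCDF (-((-(S⁻¹.mulVec μ)) ⬝ᵥ μ) /
        Real.sqrt ((-(S⁻¹.mulVec μ)) ⬝ᵥ S.mulVec (-(S⁻¹.mulVec μ))))
      = stdNormalCDF (Real.sqrt (μ ⬝ᵥ S⁻¹.mulVec μ)) := by
  set w : Fin n → ℝ := S⁻¹.mulVec μ with hw
  have hdet : IsUnit S.det := isUnit_iff_ne_zero.mpr hS.det_pos.ne'
  have hSw : S.mulVec w = μ := by
    rw [hw, Matrix.mulVec_mulVec, Matrix.mul_nonsing_inv S hdet, Matrix.one_mulVec]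
  have hμw : μ ⬝ᵥ S⁻¹.mulVec μ = w ⬝ᵥ S.mulVec w := by
    rw [hSw, ← hw, dotProduct_comm]
  have hwne : w ≠ 0 := by
    intro h
    apply hμ
    rw [← hSw, h, Matrix.mulVec_zero]
  have hc : 0 < w ⬝ᵥ S.mulVec w := by simpa only [star_trivial] using hS.dotProduct_mulVec_pos hwne
  constructor
  · intro v hv
    apply cdf_mono
    have ha : 0 < v ⬝ᵥ S.mulVec v := by simpa only [star_trivial] using hS.dotProduct_mulVec_pos hv
    have hcs := cs n S hS v w
    rw [hμw, div_le_iff₀ (Real.sqrt_pos.mpr ha), ← hSw]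
    have h1 : -(v ⬝ᵥ S.mulVec w) ≤ Real.sqrt ((v ⬝ᵥ S.mulVec w)^2) := by
      rw [Real.sqrt_sq_eq_abs]; exact neg_le_abs _
    calc -(v ⬝ᵥ S.mulVec w) ≤ Real.sqrt ((v ⬝ᵥ S.mulVec w)^2) := h1
      _ ≤ Real.sqrt ((v ⬝ᵥ S.mulVec v) * (w ⬝ᵥ S.mulVec w)) := Real.sqrt_le_sqrt hcs
      _ = Real.sqrt (w ⬝ᵥ S.mulVec w) * Real.sqrt (v ⬝ᵥ S.mulVec v) := by
          rw [Real.sqrt_mul ha.le, mul_comm]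
  · congr 1
    have h1 : (-w) ⬝ᵥ S.mulVec (-w) = w ⬝ᵥ S.mulVec w := by
      simp [neg_dotProduct, Matrix.mulVec_neg, dotProduct_neg]
    have h2 : -((-w) ⬝ᵥ μ) = w ⬝ᵥ S.mulVec w := by
      simp [neg_dotProduct, ← hSw]
    rw [h1, h2, hμw, Real.div_sqrt]
end

section
/- The function g : [0, ∞) → ℝ defined by g(t) = Φ(√t), where Φ is the cumulative distribution function of the standard normal distribution, is concave on [0, ∞). -/
/-! `Φ` is increasing, and concave on `[0, ∞)` because its derivative, the Gaussian density, is
decreasing there. Composing with the concave map `√·`, which sends `[0, ∞)` onto itself,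
keeps concavity. -/

open MeasureTheory ProbabilityTheory

open Real Set
open scoped NNReal

lemma continuous_gaussianPDFReal (μ : ℝ) (v : ℝ≥0) : Continuous (gaussianPDFReal μ v) := by
  rw [gaussianPDFReal_def]
  fun_prop

lemma antitoneOn_gaussianPDFReal_zero (v : ℝ≥0) : AntitoneOn (gaussianPDFReal 0 v) (Ici 0) := by
  intro x hx y hy hxy
  simp only [gaussianPDFReal, sub_zero]
  gcongr

lemma stdNormalCDF_eq_integral_Iic (x : ℝ) :
    stdNormalCDF x = ∫ u in Iic x, gaussianPDFReal 0 1 u := by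
  rw [stdNormalCDF, gaussianReal_apply_eq_integral 0 one_ne_zero,
    ENNReal.toReal_ofReal (integral_nonneg fun u => gaussianPDFReal_nonneg _ _ _)]

lemma stdNormalCDF_eq_add_intervalIntegral (x : ℝ) :
    stdNormalCDF x = stdNormalCDF 0 + ∫ u in (0 : ℝ)..x, gaussianPDFReal 0 1 u := by
  rw [stdNormalCDF_eq_integral_Iic, stdNormalCDF_eq_integral_Iic,
    intervalIntegral.integral_Iic_sub_Iic (integrable_gaussianPDFReal 0 1).integrableOn
      (integrable_gaussianPDFReal 0 1).integrableOn |>.symm]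
  ring

lemma hasDerivAt_stdNormalCDF (x : ℝ) : HasDerivAt stdNormalCDF (gaussianPDFReal 0 1 x) x := by
  have hcont := continuous_gaussianPDFReal 0 1
  have hprimitive := intervalIntegral.integral_hasDerivAt_right
    (integrable_gaussianPDFReal 0 1).intervalIntegrable (a := 0) (b := x)
    hcont.stronglyMeasurable.stronglyMeasurableAtFilter hcont.continuousAt
  rw [funext stdNormalCDF_eq_add_intervalIntegral]
  exact hprimitive.const_add _

lemma monotone_stdNormalCDF : Monotone stdNormalCDF := fun _ _ hxy =>
  ENNReal.toReal_mono (measure_ne_top _ _) (measure_mono (Iic_subset_Iic.mpr hxy))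

lemma concaveOn_stdNormalCDF_Ici : ConcaveOn ℝ (Ici 0) stdNormalCDF := by
  have hderiv : deriv stdNormalCDF = gaussianPDFReal 0 1 :=
    funext fun x => (hasDerivAt_stdNormalCDF x).deriv
  have hdiff : Differentiable ℝ stdNormalCDF := fun x =>
    (hasDerivAt_stdNormalCDF x).differentiableAt
  refine AntitoneOn.concaveOn_of_deriv (convex_Ici 0) hdiff.continuous.continuousOn
    hdiff.differentiableOn ?_
  rw [hderiv]
  exact (antitoneOn_gaussianPDFReal_zero 1).mono interior_subset

lemma Real.sqrt_image_Ici_zero : sqrt '' Ici 0 = Ici 0 := by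
  ext y
  refine ⟨?_, fun hy => ⟨y ^ 2, sq_nonneg y, sqrt_sq hy⟩⟩
  rintro ⟨x, -, rfl⟩
  exact sqrt_nonneg x

/-- The function `g(t) = Φ(√t)`, where `Φ` is the standard normal CDF, is
concave on `[0, ∞)`. -/
theorem stmt_11 : ConcaveOn ℝ (Set.Ici (0 : ℝ)) (fun t => stdNormalCDF (Real.sqrt t)) := by
  have hcdf : ConcaveOn ℝ (sqrt '' Ici 0) stdNormalCDF := by
    rw [Real.sqrt_image_Ici_zero]
    exact concaveOn_stdNormalCDF_Ici
  exact hcdf.comp strictConcaveOn_sqrt.concaveOn (monotone_stdNormalCDF.monotoneOn _)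
end
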